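/- Let (K, d) be a compact metric space, let γ = (γ₁, …, γₙ) be a system of proper contractions on K, and let φ: K → K be continuous with γ₁, …, γₙ as inverse branches. Assume that K is self-similar with respect to γ and that γ satisfies the measure separation condition in K. Let C_φ be the composition operator f ↦ f∘φ on L²(K, μ^H) and, for a ∈ L^∞(K, μ^H), let M_a be the multiplication operator f ↦ a·f on L²(K, μ^H). Then C_φ* M_a C_φ = M_{L_φ(a)}, where (L_φ a)(x) = (1/n)·Σ_{i=1}^n a(γᵢ(x)). -/

import Mathlib

open MeasureTheory Set Filter Topology
open scoped ENNReal NNReal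

noncomputable section

/-- A continuous map `g : K → K` on a metric space is a *proper contraction* if there are
constants `0 < c₁ ≤ c₂ < 1` with `c₁ d(x,y) ≤ d(g x, g y) ≤ c₂ d(x,y)` for all `x, y`. -/
def ProperContraction {K : Type*} [MetricSpace K] (g : K → K) : Prop :=
  ∃ c₁ c₂ : ℝ, 0 < c₁ ∧ c₁ ≤ c₂ ∧ c₂ < 1 ∧
    ∀ x y : K, c₁ * dist x y ≤ dist (g x) (g y) ∧ dist (g x) (g y) ≤ c₂ * dist x y

/-- `K` is self-similar with respect to the system `γ`: `K = ⋃ i, γ i (K)`. -/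
def SelfSimilarSet {K : Type*} [MetricSpace K] {n : ℕ} (γ : Fin n → K → K) : Prop :=
  (⋃ i, γ i '' Set.univ) = Set.univ

/-- `μ` is a self-similar Borel probability measure for the system `γ` with weights `p`. -/
def IsSelfSimilarMeasure {K : Type*} [MetricSpace K] [MeasurableSpace K] {n : ℕ}
    (γ : Fin n → K → K) (p : Fin n → ℝ) (μ : Measure K) : Prop :=
  IsProbabilityMeasure μ ∧
    ∀ E : Set K, MeasurableSet E → μ E = ∑ i, ENNReal.ofReal (p i) * μ (γ i ⁻¹' E)

/-- `μ` is the Hutchinson measure of the system `γ`: the self-similar probability measure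
with all weights equal to `1/n`. -/
def IsHutchinsonMeasure {K : Type*} [MetricSpace K] [MeasurableSpace K] {n : ℕ}
    (γ : Fin n → K → K) (μ : Measure K) : Prop :=
  IsProbabilityMeasure μ ∧
    ∀ E : Set K, MeasurableSet E → μ E = (n : ℝ≥0∞)⁻¹ * ∑ i, μ (γ i ⁻¹' E)

/-- The system `γ` satisfies the measure separation condition: every self-similar measure gives
measure zero to `γ i (K) ∩ γ j (K)` for `i ≠ j`. -/
def MeasureSeparation {K : Type*} [MetricSpace K] [MeasurableSpace K] {n : ℕ}
    (γ : Fin n → K → K) : Prop :=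
  ∀ p : Fin n → ℝ, (∀ i, 0 < p i) → (∑ i, p i) = 1 →
    ∀ μ : Measure K, IsSelfSimilarMeasure γ p μ →
      ∀ i j : Fin n, i ≠ j → μ (γ i '' Set.univ ∩ γ j '' Set.univ) = 0

/-! The pairing of `C_φ* M_a C_φ f` with `g` is `∫ conj a · (conj f · g) ∘ φ`; since `μ^H` is
the average of its images under the `γᵢ` and `φ ∘ γᵢ = id`, this integral equals
`∫ L_φ(conj a) · conj f · g`, which is the pairing of `M_{L_φ a} f` with `g`. -/

theorem ProperContraction.continuous {K : Type*} [MetricSpace K] {g : K → K}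
    (hg : ProperContraction g) : Continuous g := by
  obtain ⟨c₁, c₂, hc₁, hc₁₂, -, hdist⟩ := hg
  have hc₂ : 0 ≤ c₂ := hc₁.le.trans hc₁₂
  refine (LipschitzWith.of_dist_le_mul (K := c₂.toNNReal) fun x y => ?_).continuous
  rw [Real.coe_toNNReal c₂ hc₂]
  exact (hdist x y).2

namespace IsHutchinsonMeasure

variable {K : Type*} [MetricSpace K] [MeasurableSpace K] {n : ℕ} {γ : Fin n → K → K}
  {μ : Measure K}

theorem natCast_smul_eq_sum_map (hμ : IsHutchinsonMeasure γ μ) (hn : n ≠ 0)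
    (hγ : ∀ i, Measurable (γ i)) : (n : ℝ≥0∞) • μ = ∑ i, μ.map (γ i) := by
  ext E hE
  rw [Measure.smul_apply, Measure.finsetSum_apply, smul_eq_mul, hμ.2 E hE, ← mul_assoc,
    ENNReal.mul_inv_cancel (Nat.cast_ne_zero.mpr hn) (ENNReal.natCast_ne_top n), one_mul]
  exact Finset.sum_congr rfl fun i _ => (Measure.map_apply (hγ i) hE).symm

theorem map_le_natCast_smul (hμ : IsHutchinsonMeasure γ μ) (hn : n ≠ 0)
    (hγ : ∀ i, Measurable (γ i)) (i : Fin n) : μ.map (γ i) ≤ (n : ℝ≥0∞) • μ := by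
  rw [hμ.natCast_smul_eq_sum_map hn hγ]
  refine Measure.le_iff.mpr fun E _ => ?_
  rw [Measure.finsetSum_apply]
  exact Finset.single_le_sum (f := fun j => μ.map (γ j) E) (fun _ _ => zero_le)
    (Finset.mem_univ i)

variable {E : Type*} [NormedAddCommGroup E]

theorem integrable_map (hμ : IsHutchinsonMeasure γ μ) (hn : n ≠ 0)
    (hγ : ∀ i, Measurable (γ i)) {H : K → E} (hH : Integrable H μ) (i : Fin n) :
    Integrable H (μ.map (γ i)) :=
  (hH.smul_measure (ENNReal.natCast_ne_top n)).mono_measure (hμ.map_le_natCast_smul hn hγ i)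

theorem integrable_comp (hμ : IsHutchinsonMeasure γ μ) (hn : n ≠ 0)
    (hγ : ∀ i, Measurable (γ i)) {H : K → E} (hH : Integrable H μ) (i : Fin n) :
    Integrable (fun x => H (γ i x)) μ :=
  (integrable_map_measure (hμ.integrable_map hn hγ hH i).1 (hγ i).aemeasurable).mp
    (hμ.integrable_map hn hγ hH i)

theorem integral_eq_inv_smul_sum [NormedSpace ℝ E] (hμ : IsHutchinsonMeasure γ μ) (hn : n ≠ 0)
    (hγ : ∀ i, Measurable (γ i)) {H : K → E} (hH : Integrable H μ) :
    ∫ x, H x ∂μ = (n : ℝ)⁻¹ • ∑ i, ∫ x, H (γ i x) ∂μ := by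
  have hHi : ∀ i, Integrable H (μ.map (γ i)) := hμ.integrable_map hn hγ hH
  have hμ_eq : μ = (n : ℝ≥0∞)⁻¹ • ∑ i, μ.map (γ i) := by
    rw [← hμ.natCast_smul_eq_sum_map hn hγ, smul_smul,
      ENNReal.inv_mul_cancel (Nat.cast_ne_zero.mpr hn) (ENNReal.natCast_ne_top n), one_smul]
  calc ∫ x, H x ∂μ = ∫ x, H x ∂((n : ℝ≥0∞)⁻¹ • ∑ i, μ.map (γ i)) := by rw [← hμ_eq]
    _ = (n : ℝ)⁻¹ • ∑ i, ∫ x, H x ∂(μ.map (γ i)) := by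
      rw [integral_smul_measure, integral_finsetSum_measure fun i _ => hHi i,
        ENNReal.toReal_inv, ENNReal.toReal_natCast]
    _ = (n : ℝ)⁻¹ • ∑ i, ∫ x, H (γ i x) ∂μ := by
      congr 1
      exact Finset.sum_congr rfl fun i _ => integral_map (hγ i).aemeasurable (hHi i).1

theorem integral_mul_comp_eq_integral_transfer_mul {𝕜 : Type*} [RCLike 𝕜] (hμ : IsHutchinsonMeasure γ μ) (hn : n ≠ 0)
    (hγ : ∀ i, Measurable (γ i)) {φ : K → K} (hbranch : ∀ i x, φ (γ i x) = x) {u v : K → 𝕜}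
    (huv : Integrable (fun x => u x * v (φ x)) μ) :
    ∫ x, u x * v (φ x) ∂μ = ∫ x, ((n : 𝕜)⁻¹ * ∑ i, u (γ i x)) * v x ∂μ := by
  have hcomp : ∀ i, (fun x => u (γ i x) * v (φ (γ i x))) = fun x => u (γ i x) * v x := by
    intro i
    simp only [hbranch]
  have hint : ∀ i, Integrable (fun x => u (γ i x) * v x) μ := fun i =>
    hcomp i ▸ hμ.integrable_comp hn hγ huv i
  simp_rw [hμ.integral_eq_inv_smul_sum hn hγ huv, hcomp, mul_assoc, Finset.sum_mul]
  rw [integral_const_mul, integral_finsetSum _ fun i _ => hint i, RCLike.real_smul_eq_coe_mul,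
    RCLike.ofReal_inv, RCLike.ofReal_natCast]

end IsHutchinsonMeasure

theorem covariant_relation_general {K : Type*} [MetricSpace K]
    [MeasurableSpace K] [BorelSpace K] {n : ℕ} (hn : 1 ≤ n)
    (γ : Fin n → K → K) (hγ : ∀ i, ProperContraction (γ i))
    (φ : K → K) (hbranch : ∀ (i : Fin n) (x : K), φ (γ i x) = x)
    (μ : Measure K) (hμ : IsHutchinsonMeasure γ μ)
    (Cφ : Lp ℂ 2 μ →L[ℂ] Lp ℂ 2 μ)
    (hCφ : ∀ f : Lp ℂ 2 μ, (Cφ f : K → ℂ) =ᵐ[μ] fun x => f (φ x))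
    (a : K → ℂ)
    (Ma : Lp ℂ 2 μ →L[ℂ] Lp ℂ 2 μ)
    (hMa : ∀ f : Lp ℂ 2 μ, (Ma f : K → ℂ) =ᵐ[μ] fun x => a x * f x)
    (MLa : Lp ℂ 2 μ →L[ℂ] Lp ℂ 2 μ)
    (hMLa : ∀ f : Lp ℂ 2 μ,
      (MLa f : K → ℂ) =ᵐ[μ] fun x => ((n : ℂ)⁻¹ * ∑ i, a (γ i x)) * f x) :
    (ContinuousLinearMap.adjoint Cφ).comp (Ma.comp Cφ) = MLa := by
  have hγm : ∀ i, Measurable (γ i) := fun i => (hγ i).continuous.measurable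
  refine ContinuousLinearMap.ext fun f => ext_inner_right ℂ fun g => ?_
  rw [ContinuousLinearMap.comp_apply, ContinuousLinearMap.comp_apply,
    ContinuousLinearMap.adjoint_inner_left, L2.inner_def, L2.inner_def]
  simp only [RCLike.inner_apply']
  have hpull : (fun x => (starRingEnd ℂ) (Ma (Cφ f) x) * Cφ g x)
      =ᵐ[μ] fun x => (starRingEnd ℂ) (a x) * ((starRingEnd ℂ) (f (φ x)) * g (φ x)) := by
    filter_upwards [hMa (Cφ f), hCφ f, hCφ g] with x hMx hfx hgx
    rw [hMx, hfx, hgx, map_mul, mul_assoc]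
  have hint : Integrable (fun x => (starRingEnd ℂ) (Ma (Cφ f) x) * Cφ g x) μ := by
    simpa only [RCLike.inner_apply'] using L2.integrable_inner (𝕜 := ℂ) (Ma (Cφ f)) (Cφ g)
  calc _ = ∫ x, (starRingEnd ℂ) (a x) * ((starRingEnd ℂ) (f (φ x)) * g (φ x)) ∂μ :=
        integral_congr_ae hpull
    _ = ∫ x, ((n : ℂ)⁻¹ * ∑ i, (starRingEnd ℂ) (a (γ i x))) * ((starRingEnd ℂ) (f x) * g x) ∂μ :=
        hμ.integral_mul_comp_eq_integral_transfer_mul (by omega) hγm hbranch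
          (u := fun x => (starRingEnd ℂ) (a x)) (v := fun y => (starRingEnd ℂ) (f y) * g y)
          (hint.congr hpull)
    _ = _ := by
      refine integral_congr_ae ?_
      filter_upwards [hMLa f] with x hMLx
      rw [hMLx, map_mul, map_mul, map_inv₀, map_natCast, map_sum]
      ring

/-- Covariant relation: under self-similarity and measure separation,
`C_φ* M_a C_φ = M_{L_φ(a)}` for `a ∈ L^∞(K, μ^H)`, where
`(L_φ a)(x) = (1/n) ∑ᵢ a(γᵢ(x))`. -/
theorem covariant_relation {K : Type*} [MetricSpace K] [CompactSpace K] [Nonempty K]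
    [MeasurableSpace K] [BorelSpace K] {n : ℕ} (hn : 1 ≤ n)
    (γ : Fin n → K → K) (hγ : ∀ i, ProperContraction (γ i))
    (φ : K → K) (hφ : Continuous φ) (hbranch : ∀ (i : Fin n) (x : K), φ (γ i x) = x)
    (hss : SelfSimilarSet γ) (hsep : MeasureSeparation γ)
    (μ : Measure K) (hμ : IsHutchinsonMeasure γ μ)
    (Cφ : Lp ℂ 2 μ →L[ℂ] Lp ℂ 2 μ)
    (hCφ : ∀ f : Lp ℂ 2 μ, (Cφ f : K → ℂ) =ᵐ[μ] fun x => f (φ x))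
    (a : K → ℂ) (ha : MemLp a ∞ μ)
    (Ma : Lp ℂ 2 μ →L[ℂ] Lp ℂ 2 μ)
    (hMa : ∀ f : Lp ℂ 2 μ, (Ma f : K → ℂ) =ᵐ[μ] fun x => a x * f x)
    (MLa : Lp ℂ 2 μ →L[ℂ] Lp ℂ 2 μ)
    (hMLa : ∀ f : Lp ℂ 2 μ,
      (MLa f : K → ℂ) =ᵐ[μ] fun x => ((n : ℂ)⁻¹ * ∑ i, a (γ i x)) * f x) :
    (ContinuousLinearMap.adjoint Cφ).comp (Ma.comp Cφ) = MLa :=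
  covariant_relation_general hn γ hγ φ hbranch μ hμ Cφ hCφ a Ma hMa MLa hMLa
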